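/- Equality δ(G,m₀,d) = 1 − (D²/M)/λ₁(G,(m₀,m₁)) holds if and only if there exists φ: V → ℝ^{|V|} satisfying the feasibility constraints ∑_u m₀(u)‖φ(u)‖² = M and ‖φ(u)−φ(v)‖ ≤ d(uv) for all uv ∈ E, together with (i) m₁(uv)(d(uv)² − ‖φ(u)−φ(v)‖²) = 0 for all uv ∈ E and (ii) Δ_{(m₀,m₁)}φ = λ₁(G,(m₀,m₁))(φ − bar(φ)). -/

import Mathlib

open Finset
open scoped Classical

/-- The weighted graph Laplacian `(Δf)(u) = (1/m₀(u))[(∑_{v∼u} m₁(uv)) f(u) − ∑_{v∼u} m₁(uv) f(v)]`. -/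
noncomputable def lapl {V : Type*} [Fintype V] (G : SimpleGraph V) [DecidableRel G.Adj]
    (m0 : V → ℝ) (m1 : Sym2 V → ℝ) (f : V → ℝ) : V → ℝ :=
  fun u => (1 / m0 u) * ((∑ v ∈ G.neighborFinset u, m1 s(u, v)) * f u
    - ∑ v ∈ G.neighborFinset u, m1 s(u, v) * f v)

/-- `lam` is an eigenvalue of the weighted Laplacian. -/
def IsEigenval {V : Type*} [Fintype V] (G : SimpleGraph V) [DecidableRel G.Adj]
    (m0 : V → ℝ) (m1 : Sym2 V → ℝ) (lam : ℝ) : Prop :=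
  ∃ f : V → ℝ, f ≠ 0 ∧ lapl G m0 m1 f = fun u => lam * f u

/-- `lam` is the smallest nonzero eigenvalue (the second smallest eigenvalue)
of the weighted Laplacian. -/
def IsLambdaOne {V : Type*} [Fintype V] (G : SimpleGraph V) [DecidableRel G.Adj]
    (m0 : V → ℝ) (m1 : Sym2 V → ℝ) (lam : ℝ) : Prop :=
  lam ≠ 0 ∧ IsEigenval G m0 m1 lam ∧
    ∀ mu : ℝ, mu ≠ 0 → IsEigenval G m0 m1 mu → lam ≤ mu

/-- The weighted barycenter `bar(φ) = (1/M) ∑_u m₀(u) φ(u)`. -/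
noncomputable def bar {V : Type*} {n : ℕ} [Fintype V] (m0 : V → ℝ)
    (φ : V → EuclideanSpace ℝ (Fin n)) : EuclideanSpace ℝ (Fin n) :=
  (1 / ∑ u, m0 u) • ∑ u, m0 u • φ u

/-- The weighted Dirichlet energy `∑_{uv∈E} m₁(uv) ‖φ(u) − φ(v)‖²`. -/
noncomputable def edgeNormSq {V : Type*} {n : ℕ} [Fintype V] (G : SimpleGraph V)
    [DecidableRel G.Adj] (m1 : Sym2 V → ℝ) (φ : V → EuclideanSpace ℝ (Fin n)) : ℝ :=
  ∑ e ∈ G.edgeFinset, m1 e *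
    Sym2.lift ⟨fun u v => ‖φ u - φ v‖ ^ 2, fun u v => by simp only [norm_sub_rev (φ u) (φ v)]⟩ e

/-- The weighted Dirichlet energy `∑_{uv∈E} m₁(uv) (φ(u) − φ(v))²` of a scalar function. -/
noncomputable def edgeSqS {V : Type*} [Fintype V] (G : SimpleGraph V)
    [DecidableRel G.Adj] (m1 : Sym2 V → ℝ) (φ : V → ℝ) : ℝ :=
  ∑ e ∈ G.edgeFinset, m1 e *
    Sym2.lift ⟨fun u v => (φ u - φ v) ^ 2, fun u v => by simp only []; ring⟩ e

/-- The subgraph of positively weighted edges. -/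
def posSub {V : Type*} (G : SimpleGraph V) (m1 : Sym2 V → ℝ) : SimpleGraph V :=
  SimpleGraph.fromRel (fun u v => G.Adj u v ∧ 0 < m1 s(u, v))

/-- Objective values of the barycenter-minimization problem:
`‖bar(φ)‖²` over `φ : V → ℝ^{|V|}` with `∑_u m₀(u)‖φ(u)‖² = M` and
`‖φ(u) − φ(v)‖ ≤ d(uv)` for all edges `uv`.  `δ(G,m₀,d)` is its infimum. -/
noncomputable def deltaSet {V : Type*} [Fintype V] (G : SimpleGraph V) [DecidableRel G.Adj]
    (m0 : V → ℝ) (d : Sym2 V → ℝ) : Set ℝ :=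
  {r | ∃ φ : V → EuclideanSpace ℝ (Fin (Fintype.card V)),
    (∑ u, m0 u * ‖φ u‖ ^ 2) = (∑ u, m0 u) ∧
    (∀ u v, G.Adj u v → ‖φ u - φ v‖ ≤ d s(u, v)) ∧
    r = ‖bar m0 φ‖ ^ 2}

/-- Objective values of the centered variance-maximization problem:
`(1/M) ∑_u m₀(u)‖φ(u)‖²` over `φ : V → ℝ^{|V|}` with `∑_u m₀(u)φ(u) = 0` and
`‖φ(u) − φ(v)‖ ≤ d(uv)` for all edges `uv`.  `ν(G,m₀,d)` is its supremum. -/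
noncomputable def nuSet {V : Type*} [Fintype V] (G : SimpleGraph V) [DecidableRel G.Adj]
    (m0 : V → ℝ) (d : Sym2 V → ℝ) : Set ℝ :=
  {r | ∃ φ : V → EuclideanSpace ℝ (Fin (Fintype.card V)),
    (∑ u, m0 u • φ u) = 0 ∧
    (∀ u v, G.Adj u v → ‖φ u - φ v‖ ≤ d s(u, v)) ∧
    r = (1 / ∑ u, m0 u) * ∑ u, m0 u * ‖φ u‖ ^ 2}

/-- Values `λ₁(G,(m₀,m₁))` over edge weights `m₁ ≥ 0` with
`∑_{uv∈E} m₁(uv) d(uv)² = D²`.  `σ(G,m₀,d)` is its supremum. -/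
noncomputable def sigmaSet {V : Type*} [Fintype V] (G : SimpleGraph V) [DecidableRel G.Adj]
    (m0 : V → ℝ) (d : Sym2 V → ℝ) : Set ℝ :=
  {lam | ∃ m1 : Sym2 V → ℝ, (∀ e, 0 ≤ m1 e) ∧
    (∑ e ∈ G.edgeFinset, m1 e * d e ^ 2) = (∑ e ∈ G.edgeFinset, d e ^ 2) ∧
    IsLambdaOne G m0 m1 lam}

/-!
For a feasible `φ`, the normalisation `∑ m₀‖φ‖² = M` turns the weighted variance
`∑ m₀‖φ − bar φ‖²` into `M (1 − ‖bar φ‖²)`. Applying the variational characterisation of `λ₁`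
to each centred coordinate of `φ`, and then the edge constraints together with the
normalisation of `m₁`, gives
`λ₁ M (1 − ‖bar φ‖²) ≤ ∑ m₁(uv) ‖φ(u) − φ(v)‖² ≤ ∑ m₁(uv) d(uv)² = D²`,
so `1 − (D²/M)/λ₁` bounds every objective value from below. A feasible `φ` attains the bound
exactly when both inequalities are equalities: the second one is (i), and equality in the
Rayleigh bound forces each centred coordinate to be a `λ₁`-eigenfunction, which is (ii).
The feasible set is compact, so `δ` is attained, and `δ` equals the bound iff some feasible
`φ` attains it.
-/

section EdgeSums

variable {V : Type*} [Fintype V] (G : SimpleGraph V) [DecidableRel G.Adj]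

def neighborSigmaEquivDart : (Σ u : V, (G.neighborFinset u : Finset V)) ≃ G.Dart where
  toFun s := ⟨(s.1, s.2), (G.mem_neighborFinset _ _).1 s.2.2⟩
  invFun d := ⟨d.fst, ⟨d.snd, (G.mem_neighborFinset _ _).2 d.adj⟩⟩

lemma sum_dart_eq_sum_sum_neighborFinset (f : V → V → ℝ) :
    ∑ d : G.Dart, f d.fst d.snd = ∑ u, ∑ v ∈ G.neighborFinset u, f u v := by
  rw [← Fintype.sum_equiv (neighborSigmaEquivDart G) (fun s => f s.1 s.2) _ fun _ => rfl,
    ← Finset.univ_sigma_univ, Finset.sum_sigma]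
  exact Finset.sum_congr rfl fun u _ => Finset.sum_coe_sort (G.neighborFinset u) (f u)

lemma sum_dart_eq_sum_edgeFinset (f : V → V → ℝ) :
    ∑ d : G.Dart, f d.fst d.snd = ∑ e ∈ G.edgeFinset,
      Sym2.lift ⟨fun u v => f u v + f v u, fun _ _ => add_comm _ _⟩ e := by
  rw [← Finset.sum_fiberwise_of_maps_to (g := SimpleGraph.Dart.edge)
    fun d _ => G.mem_edgeFinset.2 d.edge_mem]
  refine Finset.sum_congr rfl fun e he => ?_
  induction e with
  | _ u v =>
    let d : G.Dart := ⟨(u, v), G.mem_edgeFinset.1 he⟩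
    rw [show (univ.filter fun d' : G.Dart => d'.edge = s(u, v)) = {d, d.symm} from d.edge_fiber,
      Finset.sum_pair d.symm_ne.symm]
    rfl

end EdgeSums

lemma posSub_adj {V : Type*} (G : SimpleGraph V) (m1 : Sym2 V → ℝ) {u v : V} :
    (posSub G m1).Adj u v ↔ G.Adj u v ∧ 0 < m1 s(u, v) := by
  simp only [posSub, SimpleGraph.fromRel_adj, G.adj_comm v u, Sym2.eq_swap (a := v), or_self]
  exact ⟨And.right, fun h => ⟨h.1.ne, h⟩⟩

section Laplacian

variable {V : Type*} [Fintype V] (G : SimpleGraph V) [DecidableRel G.Adj]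
  (m0 : V → ℝ) (m1 : Sym2 V → ℝ)

noncomputable def edgeForm (g h : V → ℝ) : ℝ :=
  ∑ e ∈ G.edgeFinset, m1 e *
    Sym2.lift ⟨fun u v => (g u - g v) * (h u - h v), fun _ _ => by ring⟩ e

lemma sum_mul_lapl_mul (hm0 : ∀ u, m0 u ≠ 0) (g h : V → ℝ) :
    ∑ u, m0 u * (lapl G m0 m1 g u * h u) = edgeForm G m1 g h := by
  have hvertex : ∀ u, m0 u * (lapl G m0 m1 g u * h u) =
      ∑ v ∈ G.neighborFinset u, m1 s(u, v) * ((g u - g v) * h u) := by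
    intro u
    rw [lapl, show ∀ A : ℝ, m0 u * (1 / m0 u * A * h u) = A * h u from
      fun A => by field_simp [hm0 u], Finset.sum_mul, ← Finset.sum_sub_distrib, Finset.sum_mul]
    exact Finset.sum_congr rfl fun v _ => by ring
  rw [Finset.sum_congr rfl fun u _ => hvertex u, ← sum_dart_eq_sum_sum_neighborFinset,
    sum_dart_eq_sum_edgeFinset G (fun u v => m1 s(u, v) * ((g u - g v) * h u))]
  refine Finset.sum_congr rfl fun e _ => ?_
  induction e with
  | _ u v =>
    simp only [Sym2.lift_mk]
    rw [show s(v, u) = s(u, v) from Sym2.eq_swap]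
    ring

lemma edgeForm_self (g : V → ℝ) : edgeForm G m1 g g = edgeSqS G m1 g :=
  Finset.sum_congr rfl fun e _ => by
    induction e with
    | _ u v => simp only [Sym2.lift_mk]; ring

lemma sum_mul_lapl_eq_zero (hm0 : ∀ u, m0 u ≠ 0) (g : V → ℝ) :
    ∑ u, m0 u * lapl G m0 m1 g u = 0 := by
  have h := sum_mul_lapl_mul G m0 m1 hm0 g fun _ => 1
  simp only [mul_one] at h
  rw [h]
  exact Finset.sum_eq_zero fun e _ => by
    induction e with
    | _ u v => simp

lemma lapl_sub_const (g : V → ℝ) (c : ℝ) :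
    lapl G m0 m1 (fun u => g u - c) = lapl G m0 m1 g := by
  funext u
  simp only [lapl, mul_sub, Finset.sum_sub_distrib, ← Finset.sum_mul]
  ring

lemma edgeSqS_nonneg (hm1 : ∀ e, 0 ≤ m1 e) (g : V → ℝ) : 0 ≤ edgeSqS G m1 g :=
  Finset.sum_nonneg fun e _ => by
    induction e with
    | _ u v => exact mul_nonneg (hm1 _) (sq_nonneg _)

lemma continuous_edgeSqS : Continuous (edgeSqS G m1) :=
  continuous_finsetSum _ fun e _ => by
    induction e with
    | _ u v => simp only [Sym2.lift_mk]; fun_prop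

lemma edgeSqS_add_mul (g h : V → ℝ) (t : ℝ) :
    edgeSqS G m1 (fun u => g u + t * h u) =
      edgeSqS G m1 g + 2 * t * edgeForm G m1 g h + t ^ 2 * edgeSqS G m1 h := by
  simp only [edgeSqS, edgeForm, Finset.mul_sum, ← Finset.sum_add_distrib]
  refine Finset.sum_congr rfl fun e _ => ?_
  induction e with
  | _ u v => simp only [Sym2.lift_mk]; ring

lemma edgeSqS_const_mul (c : ℝ) (g : V → ℝ) :
    edgeSqS G m1 (fun u => c * g u) = c ^ 2 * edgeSqS G m1 g := by
  simp only [edgeSqS, Finset.mul_sum]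
  refine Finset.sum_congr rfl fun e _ => ?_
  induction e with
  | _ u v => simp only [Sym2.lift_mk]; ring

lemma edgeSqS_sub_const (g : V → ℝ) (c : ℝ) :
    edgeSqS G m1 (fun u => g u - c) = edgeSqS G m1 g :=
  Finset.sum_congr rfl fun e _ => by
    induction e with
    | _ u v => simp only [Sym2.lift_mk, sub_sub_sub_cancel_right]

lemma eq_of_edgeSqS_eq_zero (hm1 : ∀ e, 0 ≤ m1 e) (hconn : (posSub G m1).Connected)
    {g : V → ℝ} (hg : edgeSqS G m1 g = 0) (u v : V) : g u = g v := by
  have hterm := (Finset.sum_eq_zero_iff_of_nonneg fun e _ => by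
    induction e with
    | _ u v => exact mul_nonneg (hm1 _) (sq_nonneg _)).1 hg
  have hadj : ∀ u v, (posSub G m1).Adj u v → g u = g v := by
    intro u v huv
    obtain ⟨hG, hpos⟩ := (posSub_adj G m1).1 huv
    have h := hterm s(u, v) (G.mem_edgeFinset.2 hG)
    simp only [Sym2.lift_mk, mul_eq_zero, hpos.ne', false_or, pow_eq_zero_iff two_ne_zero,
      sub_eq_zero] at h
    exact h
  obtain ⟨w⟩ := hconn u v
  induction w with
  | nil => rfl
  | cons h _ ih => exact (hadj _ _ h).trans ih

end Laplacian

section Spectrum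

variable {V : Type*} [Fintype V] {G : SimpleGraph V} [DecidableRel G.Adj]
  {m0 : V → ℝ} {m1 : Sym2 V → ℝ}

lemma sum_mul_sq_pos_of_ne_zero (hm0 : ∀ u, 0 < m0 u) {f : V → ℝ} (hf : f ≠ 0) :
    0 < ∑ u, m0 u * f u ^ 2 := by
  obtain ⟨u, hu⟩ := Function.ne_iff.1 hf
  have hu : f u ≠ 0 := hu
  exact Finset.sum_pos' (fun v _ => mul_nonneg (hm0 v).le (sq_nonneg _))
    ⟨u, Finset.mem_univ u, mul_pos (hm0 u) (by positivity)⟩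

lemma sum_mul_eq_zero_of_lapl_eq (hm0 : ∀ u, m0 u ≠ 0) {mu : ℝ} (hmu : mu ≠ 0) {f : V → ℝ}
    (hf : lapl G m0 m1 f = fun u => mu * f u) : ∑ u, m0 u * f u = 0 := by
  have h := sum_mul_lapl_eq_zero G m0 m1 hm0 f
  simp only [hf, mul_left_comm (m0 _) mu, ← Finset.mul_sum] at h
  exact (mul_eq_zero.1 h).resolve_left hmu

lemma edgeSqS_eq_of_lapl_eq (hm0 : ∀ u, m0 u ≠ 0) {mu : ℝ} {f : V → ℝ}
    (hf : lapl G m0 m1 f = fun u => mu * f u) :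
    edgeSqS G m1 f = mu * ∑ u, m0 u * f u ^ 2 := by
  rw [← edgeForm_self, ← sum_mul_lapl_mul G m0 m1 hm0, hf, Finset.mul_sum]
  exact Finset.sum_congr rfl fun u _ => by ring

lemma IsLambdaOne.nonempty {lam : ℝ} (hlam : IsLambdaOne G m0 m1 lam) : Nonempty V := by
  obtain ⟨-, ⟨f, hf, -⟩, -⟩ := hlam
  obtain ⟨u, -⟩ := Function.ne_iff.1 hf
  exact ⟨u⟩

lemma IsLambdaOne.sum_pos (hm0 : ∀ u, 0 < m0 u) {lam : ℝ} (hlam : IsLambdaOne G m0 m1 lam) :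
    0 < ∑ u, m0 u :=
  have := hlam.nonempty
  Finset.sum_pos (fun u _ => hm0 u) Finset.univ_nonempty

lemma IsLambdaOne.pos (hm0 : ∀ u, 0 < m0 u) (hm1 : ∀ e, 0 ≤ m1 e) {lam : ℝ}
    (hlam : IsLambdaOne G m0 m1 lam) : 0 < lam := by
  obtain ⟨hlam0, ⟨f, hf0, hf⟩, -⟩ := hlam
  have hE := edgeSqS_eq_of_lapl_eq (fun u => (hm0 u).ne') hf
  have hE0 := edgeSqS_nonneg G m1 hm1 f
  have hN := sum_mul_sq_pos_of_ne_zero hm0 hf0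
  exact lt_of_le_of_ne (nonneg_of_mul_nonneg_left (hE ▸ hE0) hN) hlam0.symm

lemma eq_zero_of_forall_mul_sq_add_mul_nonneg {a b : ℝ} (h : ∀ t : ℝ, 0 ≤ a * t ^ 2 + b * t) :
    b = 0 := by
  have hd := discrim_le_zero (a := a) (b := b) (c := 0) fun t => by simpa [sq] using h t
  rw [discrim, mul_zero, sub_zero] at hd
  exact pow_eq_zero_iff two_ne_zero |>.1 (le_antisymm hd (sq_nonneg b))

/-- `t ↦ edgeSqS (g + t h) - mu * ∑ m0 (g + t h)²` is a nonnegative quadratic vanishing at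
`t = 0`, so its linear coefficient is zero. -/
lemma edgeForm_eq_of_edgeSqS_eq {mu : ℝ}
    (hmu : ∀ w : V → ℝ, ∑ u, m0 u * w u = 0 → mu * ∑ u, m0 u * w u ^ 2 ≤ edgeSqS G m1 w)
    {g : V → ℝ} (hg : ∑ u, m0 u * g u = 0) (hgE : edgeSqS G m1 g = mu * ∑ u, m0 u * g u ^ 2)
    {h : V → ℝ} (hh : ∑ u, m0 u * h u = 0) :
    edgeForm G m1 g h = mu * ∑ u, m0 u * (g u * h u) := by
  suffices 2 * (edgeForm G m1 g h - mu * ∑ u, m0 u * (g u * h u)) = 0 by linarith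
  refine eq_zero_of_forall_mul_sq_add_mul_nonneg
    (a := edgeSqS G m1 h - mu * ∑ u, m0 u * h u ^ 2) fun t => ?_
  have hcent : ∑ u, m0 u * (g u + t * h u) = 0 := by
    simp only [mul_add, mul_left_comm (m0 _) t, Finset.sum_add_distrib, ← Finset.mul_sum, hg, hh,
      mul_zero, add_zero]
  have hN : ∑ u, m0 u * (g u + t * h u) ^ 2 = ∑ u, m0 u * g u ^ 2 +
      2 * t * ∑ u, m0 u * (g u * h u) + t ^ 2 * ∑ u, m0 u * h u ^ 2 := by
    simp only [Finset.mul_sum, ← Finset.sum_add_distrib]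
    exact Finset.sum_congr rfl fun u _ => by ring
  have := hmu _ hcent
  rw [edgeSqS_add_mul, hN, hgE] at this
  linarith

lemma lapl_eq_of_edgeSqS_eq (hm0 : ∀ u, 0 < m0 u) {mu : ℝ}
    (hmu : ∀ w : V → ℝ, ∑ u, m0 u * w u = 0 → mu * ∑ u, m0 u * w u ^ 2 ≤ edgeSqS G m1 w)
    {g : V → ℝ} (hg : ∑ u, m0 u * g u = 0) (hgE : edgeSqS G m1 g = mu * ∑ u, m0 u * g u ^ 2) :
    lapl G m0 m1 g = fun u => mu * g u := by
  have hm0' : ∀ u, m0 u ≠ 0 := fun u => (hm0 u).ne'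
  set r : V → ℝ := fun u => lapl G m0 m1 g u - mu * g u with hr
  have hrc : ∑ u, m0 u * r u = 0 := by
    simp only [hr, mul_sub, Finset.sum_sub_distrib, mul_left_comm (m0 _) mu, ← Finset.mul_sum,
      sum_mul_lapl_eq_zero G m0 m1 hm0', hg, mul_zero, sub_zero]
  have hr0 : ∑ u, m0 u * r u ^ 2 = 0 := by
    have h := edgeForm_eq_of_edgeSqS_eq hmu hg hgE hrc
    rw [← sum_mul_lapl_mul G m0 m1 hm0', Finset.mul_sum, ← sub_eq_zero,
      ← Finset.sum_sub_distrib] at h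
    rw [← h]
    exact Finset.sum_congr rfl fun u _ => by simp only [hr]; ring
  have : r = 0 := by
    by_contra hne
    exact (sum_mul_sq_pos_of_ne_zero hm0 hne).ne' hr0
  funext u
  simpa [hr, sub_eq_zero] using congrFun this u

end Spectrum

lemma isCompact_setOf_sum_mul_norm_sq_eq {V E : Type*} [Fintype V] [NormedAddCommGroup E]
    [ProperSpace E] {m0 : V → ℝ} (hm0 : ∀ u, 0 < m0 u) (c : ℝ) :
    IsCompact {φ : V → E | ∑ u, m0 u * ‖φ u‖ ^ 2 = c} := by
  refine (isCompact_univ_pi fun u => isCompact_closedBall (0 : E) √(c / m0 u)).of_isClosed_subset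
    (isClosed_eq (by fun_prop) continuous_const) fun φ hφ u _ => ?_
  have hterm : ∀ v, 0 ≤ m0 v * ‖φ v‖ ^ 2 := fun v => mul_nonneg (hm0 v).le (sq_nonneg _)
  have hle : m0 u * ‖φ u‖ ^ 2 ≤ c :=
    hφ ▸ Finset.single_le_sum (fun v _ => hterm v) (Finset.mem_univ u)
  rw [Metric.mem_closedBall, dist_zero_right,
    Real.le_sqrt (norm_nonneg _) (div_nonneg ((hterm u).trans hle) (hm0 u).le),
    le_div_iff₀ (hm0 u), mul_comm]
  exact hle

section Rayleigh

variable {V : Type*} [Fintype V] {G : SimpleGraph V} [DecidableRel G.Adj]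
  {m0 : V → ℝ} {m1 : Sym2 V → ℝ}

variable (m0) in
def centeredSphere : Set (V → ℝ) := {g | ∑ u, m0 u * g u ^ 2 = 1 ∧ ∑ u, m0 u * g u = 0}

lemma isCompact_centeredSphere (hm0 : ∀ u, 0 < m0 u) : IsCompact (centeredSphere m0) := by
  have h : {g : V → ℝ | ∑ u, m0 u * g u ^ 2 = 1} = {g | ∑ u, m0 u * ‖g u‖ ^ 2 = 1} := by
    simp only [Real.norm_eq_abs, sq_abs]
  exact (h ▸ isCompact_setOf_sum_mul_norm_sq_eq hm0 1).inter_right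
    (isClosed_eq (by fun_prop) continuous_const)

lemma inv_sqrt_mul_mem_centeredSphere {w : V → ℝ} (hw : ∑ u, m0 u * w u = 0)
    (hN : 0 < ∑ u, m0 u * w u ^ 2) :
    (fun u => (√(∑ v, m0 v * w v ^ 2))⁻¹ * w u) ∈ centeredSphere m0 := by
  constructor
  · simp only [mul_pow, inv_pow, Real.sq_sqrt hN.le, mul_left_comm (m0 _), ← Finset.mul_sum]
    exact inv_mul_cancel₀ hN.ne'
  · simp only [mul_left_comm (m0 _), ← Finset.mul_sum, hw, mul_zero]

lemma mul_sum_sq_le_edgeSqS_of_isMinOn (hm0 : ∀ u, 0 ≤ m0 u) (hm1 : ∀ e, 0 ≤ m1 e)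
    {g₀ : V → ℝ} (hg₀ : IsMinOn (edgeSqS G m1) (centeredSphere m0) g₀) {w : V → ℝ}
    (hw : ∑ u, m0 u * w u = 0) :
    edgeSqS G m1 g₀ * ∑ u, m0 u * w u ^ 2 ≤ edgeSqS G m1 w := by
  rcases (Finset.sum_nonneg fun u _ => mul_nonneg (hm0 u) (sq_nonneg (w u))).eq_or_lt with hN | hN
  · rw [← hN, mul_zero]
    exact edgeSqS_nonneg G m1 hm1 w
  · have h := isMinOn_iff.1 hg₀ _ (inv_sqrt_mul_mem_centeredSphere hw hN)
    rw [edgeSqS_const_mul, inv_pow, Real.sq_sqrt hN.le, ← div_eq_inv_mul, le_div_iff₀ hN] at h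
    exact h

/-- A minimiser of the energy on the centred unit sphere is an eigenfunction; connectivity of
the positively weighted subgraph makes its eigenvalue nonzero, so it is at least `λ₁`. -/
theorem IsLambdaOne.mul_sum_sq_le_edgeSqS (hm0 : ∀ u, 0 < m0 u) (hm1 : ∀ e, 0 ≤ m1 e)
    (hconn : (posSub G m1).Connected) {lam : ℝ} (hlam : IsLambdaOne G m0 m1 lam) {g : V → ℝ}
    (hg : ∑ u, m0 u * g u = 0) : lam * ∑ u, m0 u * g u ^ 2 ≤ edgeSqS G m1 g := by
  obtain ⟨hlam0, ⟨f, hf0, hf⟩, hmin⟩ := hlam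
  obtain ⟨g₀, hg₀, hg₀min⟩ := (isCompact_centeredSphere hm0).exists_isMinOn
    ⟨_, inv_sqrt_mul_mem_centeredSphere (sum_mul_eq_zero_of_lapl_eq (fun u => (hm0 u).ne') hlam0 hf)
      (sum_mul_sq_pos_of_ne_zero hm0 hf0)⟩
    (continuous_edgeSqS G m1).continuousOn
  have hbound : ∀ w : V → ℝ, ∑ u, m0 u * w u = 0 →
      edgeSqS G m1 g₀ * ∑ u, m0 u * w u ^ 2 ≤ edgeSqS G m1 w := fun _ =>
    mul_sum_sq_le_edgeSqS_of_isMinOn (fun u => (hm0 u).le) hm1 hg₀min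
  have heig : lapl G m0 m1 g₀ = fun u => edgeSqS G m1 g₀ * g₀ u :=
    lapl_eq_of_edgeSqS_eq hm0 hbound hg₀.2 (by rw [hg₀.1, mul_one])
  have hg₀ne : g₀ ≠ 0 := by
    rintro rfl
    simpa using hg₀.1
  have hE₀ : edgeSqS G m1 g₀ ≠ 0 := by
    intro hE
    obtain ⟨u₀, -⟩ := Function.ne_iff.1 hg₀ne
    have hconst : ∑ u, m0 u * g₀ u ^ 2 = g₀ u₀ * ∑ u, m0 u * g₀ u := by
      rw [Finset.mul_sum]
      exact Finset.sum_congr rfl fun u _ => by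
        rw [eq_of_edgeSqS_eq_zero G m1 hm1 hconn hE u u₀]; ring
    rw [hg₀.1, hg₀.2, mul_zero] at hconst
    exact one_ne_zero hconst
  calc lam * ∑ u, m0 u * g u ^ 2
      ≤ edgeSqS G m1 g₀ * ∑ u, m0 u * g u ^ 2 :=
        mul_le_mul_of_nonneg_right (hmin _ hE₀ ⟨g₀, hg₀ne, heig⟩)
          (Finset.sum_nonneg fun u _ => mul_nonneg (hm0 u).le (sq_nonneg _))
    _ ≤ edgeSqS G m1 g := hbound g hg

end Rayleigh

section Maps

variable {V : Type*} [Fintype V] {G : SimpleGraph V} [DecidableRel G.Adj]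
  {m0 : V → ℝ} {m1 : Sym2 V → ℝ} {n : ℕ}

lemma sum_smul_eq_smul_bar (hM : ∑ u, m0 u ≠ 0) (φ : V → EuclideanSpace ℝ (Fin n)) :
    ∑ u, m0 u • φ u = (∑ u, m0 u) • bar m0 φ := by
  rw [bar, smul_smul, mul_one_div_cancel hM, one_smul]

lemma sum_mul_sub_bar_apply_eq_zero (hM : ∑ u, m0 u ≠ 0) (φ : V → EuclideanSpace ℝ (Fin n))
    (i : Fin n) : ∑ u, m0 u * (φ u i - bar m0 φ i) = 0 := by
  have h := congrArg (· i) (sum_smul_eq_smul_bar hM φ)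
  simp only [WithLp.ofLp_sum, Finset.sum_apply, PiLp.smul_apply, smul_eq_mul] at h
  rw [Finset.sum_congr rfl fun u _ => mul_sub (m0 u) _ _, Finset.sum_sub_distrib, h,
    Finset.sum_mul, sub_self]

lemma sum_mul_norm_sub_bar_sq (hM : ∑ u, m0 u ≠ 0) (φ : V → EuclideanSpace ℝ (Fin n)) :
    ∑ u, m0 u * ‖φ u - bar m0 φ‖ ^ 2 =
      ∑ u, m0 u * ‖φ u‖ ^ 2 - (∑ u, m0 u) * ‖bar m0 φ‖ ^ 2 := by
  calc ∑ u, m0 u * ‖φ u - bar m0 φ‖ ^ 2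
      = ∑ u, (m0 u * ‖φ u‖ ^ 2 - 2 * inner ℝ (m0 u • φ u) (bar m0 φ)
          + m0 u * ‖bar m0 φ‖ ^ 2) :=
        Finset.sum_congr rfl fun u _ => by rw [norm_sub_sq_real, real_inner_smul_left]; ring
    _ = ∑ u, m0 u * ‖φ u‖ ^ 2 - 2 * inner ℝ (∑ u, m0 u • φ u) (bar m0 φ)
          + (∑ u, m0 u) * ‖bar m0 φ‖ ^ 2 := by
        rw [Finset.sum_add_distrib, Finset.sum_sub_distrib, ← Finset.mul_sum, sum_inner,
          Finset.sum_mul]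
    _ = _ := by
        rw [sum_smul_eq_smul_bar hM, real_inner_smul_left, real_inner_self_eq_norm_sq]
        ring

lemma sum_mul_norm_sq_eq_sum_apply (φ : V → EuclideanSpace ℝ (Fin n)) :
    ∑ u, m0 u * ‖φ u‖ ^ 2 = ∑ i, ∑ u, m0 u * φ u i ^ 2 := by
  simp only [EuclideanSpace.real_norm_sq_eq, Finset.mul_sum]
  exact Finset.sum_comm

lemma edgeNormSq_eq_sum_edgeSqS (φ : V → EuclideanSpace ℝ (Fin n)) :
    edgeNormSq G m1 φ = ∑ i, edgeSqS G m1 (fun u => φ u i) := by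
  simp only [edgeSqS, ← Finset.sum_comm (s := G.edgeFinset), ← Finset.mul_sum]
  refine Finset.sum_congr rfl fun e _ => ?_
  induction e with
  | _ u v => simp only [Sym2.lift_mk, EuclideanSpace.real_norm_sq_eq, PiLp.sub_apply]

lemma edgeNormSq_sub_mul_sum_norm_sub_bar_sq (lam : ℝ) (φ : V → EuclideanSpace ℝ (Fin n)) :
    edgeNormSq G m1 φ - lam * ∑ u, m0 u * ‖φ u - bar m0 φ‖ ^ 2 =
      ∑ i, (edgeSqS G m1 (fun u => φ u i - bar m0 φ i) -
        lam * ∑ u, m0 u * (φ u i - bar m0 φ i) ^ 2) := by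
  simp only [edgeNormSq_eq_sum_edgeSqS, sum_mul_norm_sq_eq_sum_apply, Finset.mul_sum,
    ← Finset.sum_sub_distrib, edgeSqS_sub_const, PiLp.sub_apply]

theorem IsLambdaOne.mul_sum_norm_sub_bar_sq_le (hm0 : ∀ u, 0 < m0 u) (hm1 : ∀ e, 0 ≤ m1 e)
    (hconn : (posSub G m1).Connected) {lam : ℝ} (hlam : IsLambdaOne G m0 m1 lam)
    (φ : V → EuclideanSpace ℝ (Fin n)) :
    lam * ∑ u, m0 u * ‖φ u - bar m0 φ‖ ^ 2 ≤ edgeNormSq G m1 φ := by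
  rw [← sub_nonneg, edgeNormSq_sub_mul_sum_norm_sub_bar_sq]
  exact Finset.sum_nonneg fun i _ => sub_nonneg.2 <| hlam.mul_sum_sq_le_edgeSqS hm0 hm1 hconn
    (sum_mul_sub_bar_apply_eq_zero (hlam.sum_pos hm0).ne' φ i)

theorem IsLambdaOne.mul_sum_norm_sub_bar_sq_eq_iff (hm0 : ∀ u, 0 < m0 u)
    (hm1 : ∀ e, 0 ≤ m1 e) (hconn : (posSub G m1).Connected) {lam : ℝ}
    (hlam : IsLambdaOne G m0 m1 lam) (φ : V → EuclideanSpace ℝ (Fin n)) :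
    lam * ∑ u, m0 u * ‖φ u - bar m0 φ‖ ^ 2 = edgeNormSq G m1 φ ↔
      ∀ i, lapl G m0 m1 (fun u => φ u i) = fun u => lam * (φ u i - bar m0 φ i) := by
  have hcent := sum_mul_sub_bar_apply_eq_zero (hlam.sum_pos hm0).ne' φ
  rw [eq_comm, ← sub_eq_zero, edgeNormSq_sub_mul_sum_norm_sub_bar_sq,
    Finset.sum_eq_zero_iff_of_nonneg fun i _ => sub_nonneg.2 <|
      hlam.mul_sum_sq_le_edgeSqS hm0 hm1 hconn (hcent i)]
  refine forall_congr' fun i => ?_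
  rw [← lapl_sub_const G m0 m1 (fun u => φ u i) (bar m0 φ i)]
  simp only [Finset.mem_univ, true_implies, sub_eq_zero]
  exact ⟨lapl_eq_of_edgeSqS_eq hm0 (fun _ => hlam.mul_sum_sq_le_edgeSqS hm0 hm1 hconn) (hcent i),
    edgeSqS_eq_of_lapl_eq fun u => (hm0 u).ne'⟩

end Maps

section Feasible

variable {V : Type*} [Fintype V] {G : SimpleGraph V} [DecidableRel G.Adj]
  {m0 : V → ℝ} {m1 : Sym2 V → ℝ} {d : Sym2 V → ℝ} {n : ℕ}

lemma edgeNormSq_le (hm1 : ∀ e, 0 ≤ m1 e) {φ : V → EuclideanSpace ℝ (Fin n)}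
    (hφ : ∀ u v, G.Adj u v → ‖φ u - φ v‖ ≤ d s(u, v)) :
    edgeNormSq G m1 φ ≤ ∑ e ∈ G.edgeFinset, m1 e * d e ^ 2 := by
  refine Finset.sum_le_sum fun e he => ?_
  induction e with
  | _ u v =>
    exact mul_le_mul_of_nonneg_left
      (pow_le_pow_left₀ (norm_nonneg _) (hφ u v (G.mem_edgeFinset.1 he)) 2) (hm1 _)

lemma edgeNormSq_eq_iff (hm1 : ∀ e, 0 ≤ m1 e) {φ : V → EuclideanSpace ℝ (Fin n)}
    (hφ : ∀ u v, G.Adj u v → ‖φ u - φ v‖ ≤ d s(u, v)) :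
    edgeNormSq G m1 φ = ∑ e ∈ G.edgeFinset, m1 e * d e ^ 2 ↔
      ∀ u v, G.Adj u v → m1 s(u, v) * (d s(u, v) ^ 2 - ‖φ u - φ v‖ ^ 2) = 0 := by
  rw [edgeNormSq, Finset.sum_eq_sum_iff_of_le]
  · constructor
    · intro h u v huv
      have h := h s(u, v) (G.mem_edgeFinset.2 huv)
      simp only [Sym2.lift_mk] at h
      linear_combination -h
    · intro h e he
      induction e with
      | _ u v =>
        simp only [Sym2.lift_mk]
        linear_combination -h u v (G.mem_edgeFinset.1 he)
  · intro e he
    induction e with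
    | _ u v =>
      exact mul_le_mul_of_nonneg_left
        (pow_le_pow_left₀ (norm_nonneg _) (hφ u v (G.mem_edgeFinset.1 he)) 2) (hm1 _)

lemma le_norm_bar_sq (hm0 : ∀ u, 0 < m0 u) (hm1 : ∀ e, 0 ≤ m1 e)
    (hconn : (posSub G m1).Connected)
    (hnorm : ∑ e ∈ G.edgeFinset, m1 e * d e ^ 2 = ∑ e ∈ G.edgeFinset, d e ^ 2)
    {lam : ℝ} (hlam : IsLambdaOne G m0 m1 lam) {φ : V → EuclideanSpace ℝ (Fin n)}
    (hφM : ∑ u, m0 u * ‖φ u‖ ^ 2 = ∑ u, m0 u)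
    (hφd : ∀ u v, G.Adj u v → ‖φ u - φ v‖ ≤ d s(u, v)) :
    1 - (∑ e ∈ G.edgeFinset, d e ^ 2) / (∑ u, m0 u) / lam ≤ ‖bar m0 φ‖ ^ 2 := by
  have hM := hlam.sum_pos hm0
  have hchain := (hlam.mul_sum_norm_sub_bar_sq_le hm0 hm1 hconn φ).trans
    (hnorm ▸ edgeNormSq_le hm1 hφd)
  rw [sum_mul_norm_sub_bar_sq hM.ne', hφM] at hchain
  rw [div_div, sub_le_comm, le_div_iff₀ (mul_pos hM (hlam.pos hm0 hm1))]
  linear_combination hchain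

lemma norm_bar_sq_eq_iff (hm0 : ∀ u, 0 < m0 u) (hm1 : ∀ e, 0 ≤ m1 e)
    (hconn : (posSub G m1).Connected)
    (hnorm : ∑ e ∈ G.edgeFinset, m1 e * d e ^ 2 = ∑ e ∈ G.edgeFinset, d e ^ 2)
    {lam : ℝ} (hlam : IsLambdaOne G m0 m1 lam) {φ : V → EuclideanSpace ℝ (Fin n)}
    (hφM : ∑ u, m0 u * ‖φ u‖ ^ 2 = ∑ u, m0 u)
    (hφd : ∀ u v, G.Adj u v → ‖φ u - φ v‖ ≤ d s(u, v)) :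
    ‖bar m0 φ‖ ^ 2 = 1 - (∑ e ∈ G.edgeFinset, d e ^ 2) / (∑ u, m0 u) / lam ↔
      (∀ u v, G.Adj u v → m1 s(u, v) * (d s(u, v) ^ 2 - ‖φ u - φ v‖ ^ 2) = 0) ∧
      ∀ i, lapl G m0 m1 (fun u => φ u i) = fun u => lam * (φ u i - bar m0 φ i) := by
  have hM := hlam.sum_pos hm0
  have hvar : lam * ∑ u, m0 u * ‖φ u - bar m0 φ‖ ^ 2 =
      (1 - ‖bar m0 φ‖ ^ 2) * ((∑ u, m0 u) * lam) := by
    rw [sum_mul_norm_sub_bar_sq hM.ne', hφM]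
    ring
  have hle₁ := hlam.mul_sum_norm_sub_bar_sq_le hm0 hm1 hconn φ
  have hle₂ := hnorm ▸ edgeNormSq_le hm1 hφd
  rw [← edgeNormSq_eq_iff hm1 hφd, hnorm, ← hlam.mul_sum_norm_sub_bar_sq_eq_iff hm0 hm1 hconn,
    div_div, eq_sub_iff_add_eq, ← eq_sub_iff_add_eq',
    div_eq_iff (mul_pos hM (hlam.pos hm0 hm1)).ne', ← hvar]
  constructor
  · intro h
    constructor <;> linarith
  · rintro ⟨h₁, h₂⟩
    linarith

lemma exists_isLeast_deltaSet [Nonempty V] (hm0 : ∀ u, 0 < m0 u)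
    (hd : ∀ e ∈ G.edgeSet, 0 ≤ d e) : ∃ r, IsLeast (deltaSet G m0 d) r := by
  let F := {φ : V → EuclideanSpace ℝ (Fin (Fintype.card V)) |
      ∑ u, m0 u * ‖φ u‖ ^ 2 = ∑ u, m0 u} ∩
    {φ | ∀ u v, G.Adj u v → ‖φ u - φ v‖ ≤ d s(u, v)}
  have hF : IsCompact F := by
    refine (isCompact_setOf_sum_mul_norm_sq_eq hm0 _).inter_right ?_
    simp only [Set.ofPred_forall]
    exact isClosed_iInter fun u => isClosed_iInter fun v => isClosed_iInter fun _ =>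
      isClosed_le (by fun_prop) continuous_const
  have hFne : F.Nonempty :=
    ⟨fun _ => EuclideanSpace.single ⟨0, Fintype.card_pos⟩ 1, by simp,
      fun u v huv => by simpa using hd _ huv⟩
  obtain ⟨φ, hφ, hmin⟩ := hF.exists_isMinOn hFne
    (by unfold bar; fun_prop : Continuous fun φ => ‖bar m0 φ‖ ^ 2).continuousOn
  refine ⟨_, ⟨φ, hφ.1, hφ.2, rfl⟩, ?_⟩
  rintro _ ⟨ψ, hψM, hψd, rfl⟩
  exact isMinOn_iff.1 hmin ψ ⟨hψM, hψd⟩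

end Feasible

theorem delta_eq_iff_general {V : Type*} [Fintype V]
    (G : SimpleGraph V) [DecidableRel G.Adj]
    (m0 : V → ℝ) (hm0 : ∀ u, 0 < m0 u)
    (d : Sym2 V → ℝ) (hd : ∀ e ∈ G.edgeSet, 0 < d e)
    (m1 : Sym2 V → ℝ) (hm1 : ∀ e, 0 ≤ m1 e) (hconn : (posSub G m1).Connected)
    (hnorm : ∑ e ∈ G.edgeFinset, m1 e * d e ^ 2 = ∑ e ∈ G.edgeFinset, d e ^ 2)
    (lam : ℝ) (hlam : IsLambdaOne G m0 m1 lam) :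
    sInf (deltaSet G m0 d) =
        1 - ((∑ e ∈ G.edgeFinset, d e ^ 2) / (∑ u, m0 u)) / lam ↔
      ∃ φ : V → EuclideanSpace ℝ (Fin (Fintype.card V)),
        (∑ u, m0 u * ‖φ u‖ ^ 2) = (∑ u, m0 u) ∧
        (∀ u v, G.Adj u v → ‖φ u - φ v‖ ≤ d s(u, v)) ∧
        (∀ u v, G.Adj u v → m1 s(u, v) * (d s(u, v) ^ 2 - ‖φ u - φ v‖ ^ 2) = 0) ∧
        (∀ i, lapl G m0 m1 (fun u => φ u i) =
          fun u => lam * (φ u i - bar m0 φ i)) := by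
  have := hlam.nonempty
  constructor
  · intro hδ
    obtain ⟨r, hr⟩ := exists_isLeast_deltaSet hm0 fun e he => (hd e he).le
    obtain ⟨φ, hφM, hφd, rfl⟩ := hr.1
    rw [hr.csInf_eq] at hδ
    exact ⟨φ, hφM, hφd, (norm_bar_sq_eq_iff hm0 hm1 hconn hnorm hlam hφM hφd).1 hδ⟩
  · rintro ⟨φ, hφM, hφd, hφ⟩
    refine IsLeast.csInf_eq ⟨⟨φ, hφM, hφd, ?_⟩, ?_⟩
    · exact ((norm_bar_sq_eq_iff hm0 hm1 hconn hnorm hlam hφM hφd).2 hφ).symm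
    · rintro _ ⟨ψ, hψM, hψd, rfl⟩
      exact le_norm_bar_sq hm0 hm1 hconn hnorm hlam hψM hψd

/-- equality `δ = 1 − (D²/M)/λ₁` holds iff there is a feasible `φ`
satisfying the complementarity condition (i) and the eigenmap condition (ii). -/
theorem delta_eq_iff {V : Type*} [Fintype V] [Nonempty V]
    (G : SimpleGraph V) [DecidableRel G.Adj] (hG : G.Connected)
    (m0 : V → ℝ) (hm0 : ∀ u, 0 < m0 u)
    (d : Sym2 V → ℝ) (hd : ∀ e ∈ G.edgeSet, 0 < d e)
    (m1 : Sym2 V → ℝ) (hm1 : ∀ e, 0 ≤ m1 e) (hconn : (posSub G m1).Connected)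
    (hnorm : ∑ e ∈ G.edgeFinset, m1 e * d e ^ 2 = ∑ e ∈ G.edgeFinset, d e ^ 2)
    (lam : ℝ) (hlam : IsLambdaOne G m0 m1 lam) :
    sInf (deltaSet G m0 d) =
        1 - ((∑ e ∈ G.edgeFinset, d e ^ 2) / (∑ u, m0 u)) / lam ↔
      ∃ φ : V → EuclideanSpace ℝ (Fin (Fintype.card V)),
        (∑ u, m0 u * ‖φ u‖ ^ 2) = (∑ u, m0 u) ∧
        (∀ u v, G.Adj u v → ‖φ u - φ v‖ ≤ d s(u, v)) ∧
        (∀ u v, G.Adj u v → m1 s(u, v) * (d s(u, v) ^ 2 - ‖φ u - φ v‖ ^ 2) = 0) ∧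
        (∀ i, lapl G m0 m1 (fun u => φ u i) =
          fun u => lam * (φ u i - bar m0 φ i)) :=
  delta_eq_iff_general G m0 hm0 d hd m1 hm1 hconn hnorm lam hlam
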